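/- Let (1+√33)/4 < α < 2, w ∈ ℝ, λ = λ₁ + iλ₂ with λ₂ > 0, and C₃ > 0. Let v : [1,∞) → ℂ satisfy the model ODE with remainder r, where |r(t)| ≤ C₃ t^{−5/4+α/2} for all t ≥ 1. Then limsup_{t→∞} t^{1/α − 1/2} |v(t)| ≤ ( (2−α)/(2α λ₂) )^{1/α}. -/

import Mathlib

/-!
Put `u(t) = t^(1/α - 1/2) |v t|`. In `(|v|²)' = 2 Re(conj v v')` the term `w v` drops out and the
nonlinearity contributes `-2λ₂ t^(-α/2) |v|^(α+2)`, so
`t (u²)' ≤ (2/α - 1 - 2λ₂ u^α) u² + 2 C₃ u t^(1/α - 3/4)`.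
The level `K = ((2-α)/(2αλ₂))^(1/α)` is where `2λ₂ K^α = 2/α - 1`. Above a level `M > K` the
first term is `≤ -c u²` with `c > 0`, and since `α > 4/3` the remainder is eventually `≤ (c/2) u²`.
So `t (u²)' ≤ -(c/2) u²` wherever `u ≥ M`, and comparison with the barrier `M² + A t^(-c/4)`
gives `limsup u ≤ M`.
-/

open Real Set Filter

noncomputable section

/-- `v` satisfies the model ODE
`v′(t) = i (w v(t) + λ t^{−α/2} |v(t)|^α v(t) + t^{−α/2} r(t))`
with continuous remainder `r` on the set `I ⊆ [1,∞)`. -/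
def SatisfiesModelODE (α w : ℝ) (lam : ℂ) (v r : ℝ → ℂ) (I : Set ℝ) : Prop :=
  ContinuousOn r I ∧
  ∀ t ∈ I, HasDerivWithinAt v
    (Complex.I * ((w : ℂ) * v t
      + lam * ((t ^ (-α / 2) : ℝ) : ℂ) * ((‖v t‖ ^ α : ℝ) : ℂ) * v t
      + ((t ^ (-α / 2) : ℝ) : ℂ) * r t)) I t

theorem eventually_le_of_mul_deriv_le_neg_mul {ψ ψ' : ℝ → ℝ} {T a b c : ℝ} (hT : 0 < T)
    (ha : 0 ≤ a) (hab : a < b) (hc : 0 < c)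
    (hψ : ∀ x ∈ Ici T, HasDerivWithinAt ψ (ψ' x) (Ici T) x)
    (hψ' : ∀ x ∈ Ici T, a ≤ ψ x → x * ψ' x ≤ -c * ψ x) :
    ∀ᶠ x in atTop, ψ x ≤ b := by
  set A := (|ψ T| + 1) * T ^ (c / 2)
  have hA : 0 < A := by positivity
  have hbarrier : ∀ x ∈ Ici T, ψ x ≤ a + A * x ^ (-(c / 2)) := by
    intro y hy
    refine image_le_of_deriv_right_lt_deriv_boundary'
      (B' := fun x ↦ A * (-(c / 2) * x ^ (-(c / 2) - 1)))
      (fun x hx ↦ (hψ x (mem_Ici.2 hx.1)).continuousWithinAt.mono fun z hz ↦ mem_Ici.2 hz.1)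
      (fun x hx ↦ (hψ x (mem_Ici.2 hx.1)).mono (Ici_subset_Ici.2 hx.1)) ?_
      (fun x hx ↦ ((continuousAt_rpow_const x _ (.inl (hT.trans_le hx.1).ne')).const_mul A
        |>.const_add a).continuousWithinAt)
      (fun x hx ↦ (((hasDerivAt_rpow_const (.inl (hT.trans_le hx.1).ne')).const_mul A).const_add
        a).hasDerivWithinAt) ?_ ⟨hy, le_rfl⟩
    · rw [mul_assoc, ← rpow_add hT, add_neg_cancel, rpow_zero, mul_one]
      linarith [le_abs_self (ψ T)]
    · -- at a contact point `x ψ' ≤ -c B < -(c/2) (B - a) = x B'`, as `B > 0`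
      intro x hx hcontact
      have hx0 : 0 < x := hT.trans_le hx.1
      have hpos : 0 < A * x ^ (-(c / 2)) := by positivity
      have hB' : x * (A * (-(c / 2) * x ^ (-(c / 2) - 1))) = -(c / 2) * (A * x ^ (-(c / 2))) := by
        rw [rpow_sub_one hx0.ne']; field_simp
      have hψx := hψ' x hx.1 (by rw [hcontact]; linarith)
      rw [hcontact] at hψx
      rw [← mul_lt_mul_iff_right₀ hx0, hB']
      nlinarith
  have hdecay : Tendsto (fun x ↦ a + A * x ^ (-(c / 2))) atTop (nhds a) := by
    simpa using ((tendsto_rpow_neg_atTop (by positivity : 0 < c / 2)).const_mul A).const_add a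
  filter_upwards [hdecay.eventually_le_const hab, eventually_ge_atTop T] with x hx hxT
  exact (hbarrier x hxT).trans hx

lemma rescaled_drift_le {α β lam C M c u p : ℝ} (hlam : 0 ≤ lam) (hα : 0 ≤ α) (hM : 0 < M)
    (hu : M ≤ u) (hc : 0 ≤ c) (hβ : β = 2 * lam * M ^ α - c) (hp : 2 * C * p ≤ c * M / 2) :
    (β - 2 * lam * u ^ α) * u ^ 2 + 2 * C * u * p ≤ -(c / 2) * u ^ 2 := by
  have hMu : M ^ α ≤ u ^ α := rpow_le_rpow hM.le hu hα
  have hdrift : β - 2 * lam * u ^ α ≤ -c := by nlinarith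
  have hforce : 2 * C * u * p ≤ c / 2 * u ^ 2 := by
    calc 2 * C * u * p = 2 * C * p * u := by ring
      _ ≤ c * M / 2 * u := mul_le_mul_of_nonneg_right hp (hM.le.trans hu)
      _ ≤ c / 2 * u ^ 2 := by
        nlinarith [mul_le_mul_of_nonneg_left (mul_le_mul_of_nonneg_right hu (hM.le.trans hu)) hc]
  nlinarith [sq_nonneg u]

lemma lt_two_mul_mul_rpow {α lam M : ℝ} (hlam : 0 < lam) (hα : 0 < α) (hα2 : α < 2)
    (hM : ((2 - α) / (2 * α * lam)) ^ (1 / α) < M) : 2 / α - 1 < 2 * lam * M ^ α := by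
  have hbase : 0 ≤ (2 - α) / (2 * α * lam) := (div_pos (by linarith) (by positivity)).le
  have hcritical : 2 * lam * (((2 - α) / (2 * α * lam)) ^ (1 / α)) ^ α = 2 / α - 1 := by
    rw [one_div, rpow_inv_rpow hbase hα.ne']
    field_simp
  rw [← hcritical]
  gcongr

open ComplexConjugate

lemma two_mul_inner_I_mul (z r lam : ℂ) (w s b : ℝ) :
    2 * inner ℝ z (Complex.I * (w * z + lam * s * b * z + s * r)) =
      -2 * lam.im * s * b * ‖z‖ ^ 2 - 2 * s * (conj z * r).im := by
  rw [Complex.inner, Complex.sq_norm, Complex.normSq_apply]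
  simp only [Complex.mul_re, Complex.mul_im, Complex.add_re, Complex.add_im, Complex.I_re,
    Complex.I_im, Complex.ofReal_re, Complex.ofReal_im, Complex.conj_re, Complex.conj_im]
  ring

lemma neg_im_conj_mul_le (z r : ℂ) : -(conj z * r).im ≤ ‖z‖ * ‖r‖ := by
  calc -(conj z * r).im ≤ |(conj z * r).im| := neg_le_abs _
    _ ≤ ‖conj z * r‖ := Complex.abs_im_le_norm _
    _ = ‖z‖ * ‖r‖ := by rw [norm_mul, Complex.norm_conj]

def scaledNorm (α : ℝ) (v : ℝ → ℂ) (t : ℝ) : ℝ := t ^ (1 / α - 1 / 2) * ‖v t‖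

lemma scaledNorm_nonneg {α t : ℝ} (v : ℝ → ℂ) (ht : 0 ≤ t) : 0 ≤ scaledNorm α v t :=
  mul_nonneg (rpow_nonneg ht _) (norm_nonneg _)

lemma scaledNorm_sq {α t : ℝ} (v : ℝ → ℂ) (ht : 0 ≤ t) :
    scaledNorm α v t ^ 2 = t ^ (2 / α - 1) * ‖v t‖ ^ 2 := by
  rw [scaledNorm, mul_pow, ← rpow_mul_natCast ht]
  congr 2
  push_cast
  ring

lemma scaledNorm_rpow {α t : ℝ} (v : ℝ → ℂ) (hα : α ≠ 0) (ht : 0 ≤ t) :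
    scaledNorm α v t ^ α = t ^ (1 - α / 2) * ‖v t‖ ^ α := by
  rw [scaledNorm, mul_rpow (rpow_nonneg ht _) (norm_nonneg _), ← rpow_mul ht]
  congr 2
  field_simp

namespace SatisfiesModelODE

variable {α w : ℝ} {lam : ℂ} {v r : ℝ → ℂ} {I J : Set ℝ}

lemma mono (h : SatisfiesModelODE α w lam v r I) (hJ : J ⊆ I) :
    SatisfiesModelODE α w lam v r J :=
  ⟨h.1.mono hJ, fun t ht ↦ (h.2 t (hJ ht)).mono hJ⟩

lemma hasDerivWithinAt_sq_norm (h : SatisfiesModelODE α w lam v r I) {t : ℝ} (ht : t ∈ I) :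
    HasDerivWithinAt (fun t ↦ ‖v t‖ ^ 2) (-2 * lam.im * t ^ (-α / 2) * ‖v t‖ ^ α * ‖v t‖ ^ 2
      - 2 * t ^ (-α / 2) * (conj (v t) * r t).im) I t := by
  have := (h.2 t ht).norm_sq
  rwa [two_mul_inner_I_mul] at this

lemma exists_hasDerivWithinAt_scaledNorm_sq (h : SatisfiesModelODE α w lam v r I) (hα : α ≠ 0)
    (hI : I ⊆ Ioi 0) {C : ℝ} (hr : ∀ t ∈ I, ‖r t‖ ≤ C * t ^ (-(5 : ℝ) / 4 + α / 2))
    {t : ℝ} (ht : t ∈ I) :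
    ∃ d, HasDerivWithinAt (fun t ↦ scaledNorm α v t ^ 2) d I t ∧
      t * d ≤ (2 / α - 1 - 2 * lam.im * scaledNorm α v t ^ α) * scaledNorm α v t ^ 2
        + 2 * C * scaledNorm α v t * t ^ (1 / α - 3 / 4) := by
  have ht0 : 0 < t := hI ht
  have hpow := (hasDerivAt_rpow_const (p := 2 / α - 1) (.inl ht0.ne')).hasDerivWithinAt (s := I)
  refine ⟨_, (hpow.mul (h.hasDerivWithinAt_sq_norm ht)).congr_of_mem
    (fun s hs ↦ scaledNorm_sq v (hI hs).le) ht, ?_⟩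
  have hrem : -(conj (v t) * r t).im ≤ ‖v t‖ * (C * t ^ (-(5 : ℝ) / 4 + α / 2)) :=
    (neg_im_conj_mul_le _ _).trans (mul_le_mul_of_nonneg_left (hr t ht) (norm_nonneg _))
  have e1 : t * t ^ (2 / α - 1 - 1) = t ^ (2 / α - 1) := by
    nth_rw 1 [← rpow_one t]
    simp only [← rpow_add ht0]
    ring_nf
  have e2 : t * t ^ (2 / α - 1) * t ^ (-α / 2) = t ^ (1 - α / 2) * t ^ (2 / α - 1) := by
    nth_rw 1 [← rpow_one t]
    simp only [← rpow_add ht0]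
    ring_nf
  have e3 : t * t ^ (2 / α - 1) * t ^ (-α / 2) * t ^ (-(5 : ℝ) / 4 + α / 2) =
      t ^ (1 / α - 1 / 2) * t ^ (1 / α - 3 / 4) := by
    nth_rw 1 [← rpow_one t]
    simp only [← rpow_add ht0]
    ring_nf
  rw [scaledNorm_rpow v hα ht0.le, scaledNorm_sq v ht0.le, scaledNorm]
  have hpos : 0 ≤ t * t ^ (2 / α - 1) * t ^ (-α / 2) := by positivity
  linear_combination 2 * mul_le_mul_of_nonneg_left hrem hpos + (2 / α - 1) * ‖v t‖ ^ 2 * e1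
    - 2 * lam.im * ‖v t‖ ^ α * ‖v t‖ ^ 2 * e2 + 2 * C * ‖v t‖ * e3

end SatisfiesModelODE

theorem model_ODE_limsup_general (α w : ℝ)
    (hα1 : (1 + Real.sqrt 33) / 4 < α) (hα2 : α < 2)
    (lam : ℂ) (hlam : 0 < lam.im)
    (C₃ : ℝ) (v r : ℝ → ℂ)
    (hode : SatisfiesModelODE α w lam v r (Ici 1))
    (hr : ∀ t : ℝ, 1 ≤ t → ‖r t‖ ≤ C₃ * t ^ (-(5:ℝ)/4 + α/2)) :
    ∀ ε : ℝ, 0 < ε → ∀ᶠ t : ℝ in atTop,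
      t ^ (1/α - 1/2) * ‖v t‖ ≤ ((2 - α) / (2 * α * lam.im)) ^ (1/α) + ε := by
  intro ε hε
  have h33 : (5 : ℝ) < √33 := (lt_sqrt (by norm_num)).2 (by norm_num)
  have hα : 4 / 3 < α := by linarith
  have hα0 : 0 < α := by linarith
  set K := ((2 - α) / (2 * α * lam.im)) ^ (1 / α)
  have hK : 0 ≤ K := rpow_nonneg (div_pos (by linarith) (by positivity)).le _
  set M := K + ε / 2 with hM
  have hKM : K < M := by linarith
  set c := 2 * lam.im * M ^ α - (2 / α - 1)
  have hc : 0 < c := sub_pos.2 (lt_two_mul_mul_rpow hlam hα0 hα2 hKM)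
  have hdecay : Tendsto (fun x : ℝ ↦ 2 * C₃ * x ^ (1 / α - 3 / 4)) atTop (nhds 0) := by
    simpa using
      (tendsto_rpow_neg_atTop (y := 3 / 4 - 1 / α) (by field_simp; linarith)).const_mul (2 * C₃)
  have hM0 : 0 < M := hK.trans_lt hKM
  obtain ⟨T, hT⟩ := eventually_atTop.1 <|
    (hdecay.eventually_le_const (half_pos (mul_pos hc hM0))).and (eventually_ge_atTop 1)
  have hT1 : 1 ≤ T := (hT T le_rfl).2
  have hT0 : 0 < T := one_pos.trans_le hT1
  choose! d hd hdle using fun t (ht : t ∈ Ici T) ↦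
    (hode.mono (Ici_subset_Ici.2 hT1)).exists_hasDerivWithinAt_scaledNorm_sq hα0.ne'
      (fun s hs ↦ hT0.trans_le hs) (fun s hs ↦ hr s (hT1.trans hs)) ht
  have hu : ∀ x ∈ Ici T, M ^ 2 ≤ scaledNorm α v x ^ 2 → M ≤ scaledNorm α v x := fun x hx ↦
    (pow_le_pow_iff_left₀ hM0.le (scaledNorm_nonneg v (hT0.le.trans hx)) two_ne_zero).1
  filter_upwards [eventually_le_of_mul_deriv_le_neg_mul hT0 (sq_nonneg M)
    (pow_lt_pow_left₀ (by linarith) hM0.le two_ne_zero : M ^ 2 < (K + ε) ^ 2) (half_pos hc) hd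
    (fun x hx hMx ↦ (hdle x hx).trans (rescaled_drift_le hlam.le hα0.le hM0 (hu x hx hMx)
      hc.le (by ring) (hT x hx).1)), eventually_ge_atTop 0] with t ht ht0
  exact (pow_le_pow_iff_left₀ (scaledNorm_nonneg v ht0) (by positivity) two_ne_zero).1 ht

/-- For `(1+√33)/4 < α < 2` and `λ₂ > 0`, solutions of the model ODE
with remainder `|r(t)| ≤ C₃ t^{−5/4+α/2}` satisfy
`limsup_{t→∞} t^{1/α−1/2} |v(t)| ≤ ((2−α)/(2αλ₂))^{1/α}`. -/
theorem model_ODE_limsup (α w : ℝ)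
    (hα1 : (1 + Real.sqrt 33) / 4 < α) (hα2 : α < 2)
    (lam : ℂ) (hlam : 0 < lam.im)
    (C₃ : ℝ) (hC₃ : 0 < C₃) (v r : ℝ → ℂ)
    (hode : SatisfiesModelODE α w lam v r (Ici 1))
    (hr : ∀ t : ℝ, 1 ≤ t → ‖r t‖ ≤ C₃ * t ^ (-(5:ℝ)/4 + α/2)) :
    ∀ ε : ℝ, 0 < ε → ∀ᶠ t : ℝ in atTop,
      t ^ (1/α - 1/2) * ‖v t‖ ≤ ((2 - α) / (2 * α * lam.im)) ^ (1/α) + ε :=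
  model_ODE_limsup_general α w hα1 hα2 lam hlam C₃ v r hode hr

end
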